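/- arXiv:1709.02420 — 2 statements merged into one kernel-verified Lean document; each statement's English description precedes it below -/
import Mathlib

section
/- Suppose t₁ and t₂ are vertices of depth d̄ ≥ δ lying in a single horoball H of the Groves–Manning space X. Then for each i ∈ {1,2} there is a geodesic γᵢ from the identity vertex * to tᵢ of the form (ηᵢ, αᵢ, τᵢ, βᵢ), where the endpoint xᵢ of ηᵢ is the first point of γᵢ in H(d̄), αᵢ and βᵢ are vertical segments of the same length contained in H^{d̄}, and τᵢ is a horizontal segment of length ≤ 3. Furthermore d(x₁, x₂) ≤ 2δ + 1. -/
/-! Core definitions: Cayley graphs, combinatorial horoballs, and the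
Groves–Manning space of a relatively hyperbolic pair, as a locally finite graph. -/

open SimpleGraph

namespace GM

variable {G : Type} [Group G] {ι : Type}

/-- Adjacency in the Cayley graph of `G` with respect to the symmetrized set `S`. -/
def cayleyAdj (S : Set G) (a b : G) : Prop :=
  a ≠ b ∧ (a⁻¹ * b ∈ S ∨ b⁻¹ * a ∈ S)

/-- The Cayley graph of `G` with respect to `S`. -/
def cayleyGraph (S : Set G) : SimpleGraph G where
  Adj := cayleyAdj S
  symm := ⟨by rintro a b ⟨h1, h2⟩; exact ⟨h1.symm, h2.symm⟩⟩
  loopless := ⟨fun a h => h.1 rfl⟩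

/-- The full subgraph of the Cayley graph on the left cosets of `P i`
(the union over all cosets; distinct cosets lie in distinct components). -/
def cosetGraph (S : Set G) (P : ι → Subgroup G) (i : ι) : SimpleGraph G where
  Adj a b := cayleyAdj S a b ∧ a⁻¹ * b ∈ P i
  symm := by
    constructor
    rintro a b ⟨⟨h0, h1⟩, h2⟩
    refine ⟨⟨h0.symm, h1.symm⟩, ?_⟩
    have := (P i).inv_mem h2
    simpa [mul_inv_rev] using this
  loopless := ⟨fun a h => h.1.1 rfl⟩

/-- Vertices of the Groves–Manning space: the group `G` (depth 0), together with,
for each `i : ι` and `g : G`, a vertex `(g, k)` at depth `k ≥ 1` in the combinatorial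
horoball over the coset `g • (P i)`. -/
def GMVert (G ι : Type) : Type := G ⊕ (ι × G × ℕ+)

/-- The depth function `𝒟` on vertices. -/
def depth : GMVert G ι → ℕ
  | .inl _ => 0
  | .inr (_, _, k) => (k : ℕ)

/-- The underlying group element ("base") of a vertex. -/
def baseElt : GMVert G ι → G
  | .inl g => g
  | .inr (_, g, _) => g

/-- The vertex over `g` at depth `l` in the horoballs for the subgroup `P i`. -/
def atLevel (i : ι) (g : G) : ℕ → GMVert G ι
  | 0 => .inl g
  | (l + 1) => .inr (i, g, ⟨l + 1, Nat.succ_pos l⟩)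

/-- Horizontal adjacency at depth `k ≥ 1` inside a horoball: two distinct elements of a
common left coset of `P i` whose distance in the coset graph is at most `2 ^ k`. -/
def horizAdjPos (S : Set G) (P : ι → Subgroup G) (i : ι) (k : ℕ) (a b : G) : Prop :=
  a ≠ b ∧ a⁻¹ * b ∈ P i ∧ (cosetGraph S P i).Reachable a b ∧ (cosetGraph S P i).dist a b ≤ 2 ^ k

/-- Horizontal adjacency at depth `l` (at depth `0` this is an edge of the coset graph). -/
def hAdjL (S : Set G) (P : ι → Subgroup G) (i : ι) (l : ℕ) (a b : G) : Prop :=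
  match l with
  | 0 => (cosetGraph S P i).Adj a b
  | (m + 1) => horizAdjPos S P i (m + 1) a b

/-- Adjacency in the Groves–Manning space: Cayley edges at depth 0, vertical edges
joining `(g, k)` to `(g, k+1)`, and horizontal horoball edges. -/
def gmAdj (S : Set G) (P : ι → Subgroup G) : GMVert G ι → GMVert G ι → Prop
  | .inl a, .inl b => cayleyAdj S a b
  | .inl a, .inr (_, b, k) => a = b ∧ (k : ℕ) = 1
  | .inr (_, a, k), .inl b => a = b ∧ (k : ℕ) = 1
  | .inr (i, a, k), .inr (j, b, l) =>
      i = j ∧ ((a = b ∧ ((l : ℕ) = (k : ℕ) + 1 ∨ (k : ℕ) = (l : ℕ) + 1)) ∨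
        ((k : ℕ) = (l : ℕ) ∧ horizAdjPos S P i (k : ℕ) a b))

/-- The (1-skeleton of the) Groves–Manning space of `(G, {P i}, S)`. -/
def GMGraph (S : Set G) (P : ι → Subgroup G) : SimpleGraph (GMVert G ι) where
  Adj := gmAdj S P
  symm := by
    constructor
    rintro (a | ⟨i, a, k⟩) (b | ⟨j, b, l⟩) h
    · exact ⟨h.1.symm, h.2.symm⟩
    · exact ⟨h.1.symm, h.2⟩
    · exact ⟨h.1.symm, h.2⟩
    · obtain ⟨rfl, (⟨rfl, hv⟩ | ⟨hk, hh⟩)⟩ := h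
      · exact ⟨rfl, Or.inl ⟨rfl, hv.symm⟩⟩
      · refine ⟨rfl, Or.inr ⟨hk.symm, hh.1.symm, ?_, hh.2.2.1.symm, ?_⟩⟩
        · have := (P i).inv_mem hh.2.1; simpa [mul_inv_rev] using this
        · rw [SimpleGraph.dist_comm, ← hk]; exact hh.2.2.2
  loopless := by
    constructor
    rintro (a | ⟨i, a, k⟩) h
    · exact h.1 rfl
    · obtain ⟨-, (⟨-, hv⟩ | ⟨-, hh⟩)⟩ := h
      · omega
      · exact hh.1 rfl

variable (S : Set G) (P : ι → Subgroup G)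

/-- The identity vertex `*` of the Groves–Manning space. -/
def idv : GMVert G ι := Sum.inl 1

/-- The ball `B_r(c)` of radius `r` about `c`, in the edge-path metric of the
Groves–Manning space. -/
def gball (c : GMVert G ι) (r : ℕ) : Set (GMVert G ι) :=
  {v | (GMGraph S P).dist c v ≤ r}

/-- The horoball over the coset `t • (P i)`. -/
def horoball (i : ι) (t : G) : Set (GMVert G ι) :=
  fun v => match v with
  | .inl g => t⁻¹ * g ∈ P i
  | .inr (j, g, _) => j = i ∧ t⁻¹ * g ∈ P i

/-- `H(m)`: the vertices of the horoball at depth exactly `m`. -/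
def horoSphere (i : ι) (t : G) (m : ℕ) : Set (GMVert G ι) :=
  {v | v ∈ horoball P i t ∧ depth v = m}

/-- `H^m`: the `m`-horoball, all vertices of the horoball at depth at least `m`. -/
def horoDeep (i : ι) (t : G) (m : ℕ) : Set (GMVert G ι) :=
  {v | v ∈ horoball P i t ∧ m ≤ depth v}

/-- A walk is geodesic if its length realizes the graph distance of its endpoints. -/
def IsGeodesic {V : Type} (Γ : SimpleGraph V) {a b : V} (p : Γ.Walk a b) : Prop :=
  p.length = Γ.dist a b

/-- `Γ` is `δ`-hyperbolic: all geodesic triangles are `δ`-slim. -/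
def SlimTriangles {V : Type} (Γ : SimpleGraph V) (δ : ℕ) : Prop :=
  ∀ ⦃a b c : V⦄ (p : Γ.Walk a b) (q : Γ.Walk b c) (r : Γ.Walk a c),
    IsGeodesic Γ p → IsGeodesic Γ q → IsGeodesic Γ r →
    ∀ v ∈ r.support,
      (∃ w ∈ p.support, Γ.dist v w ≤ δ) ∨ (∃ w ∈ q.support, Γ.dist v w ≤ δ)

end GM

namespace GM

variable {G : Type} [Group G] {ι : Type}

/-- A walk in the Groves–Manning space is vertical if each of its edges is vertical,
i.e. preserves the underlying group element. -/
def IsVerticalWalk {Γ : SimpleGraph (GMVert G ι)} {a b : GMVert G ι} (w : Γ.Walk a b) :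
    Prop :=
  ∀ d ∈ w.darts, baseElt d.toProd.1 = baseElt d.toProd.2

/-- A walk in the Groves–Manning space is horizontal if each of its edges is horizontal,
i.e. preserves the depth. -/
def IsHorizontalWalk {Γ : SimpleGraph (GMVert G ι)} {a b : GMVert G ι} (w : Γ.Walk a b) :
    Prop :=
  ∀ d ∈ w.darts, depth d.toProd.1 = depth d.toProd.2

end GM

/-!
A geodesic from `*` to a point `t` of `H(D)` is cut at its first point `x` of `H(D)`. A
geodesic between two points of `H(D)`, `D ≥ δ`, stays in `H` (it is `δ`-close to the tent
over its endpoints), and a path in `H` that reaches depth `D + s` and joins points at coset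
distance `d` has length at least `2 s + ⌈d / 2 ^ (D + s)⌉`. Going straight up to the height
minimising this cost, across, and down is therefore a geodesic, and at that height at most
three horizontal edges are needed. Finally, the vertex after the first horizontal edge of
such a geodesic between the entry points `x₁`, `x₂` is `δ`-close to `η₁` or `η₂`; a nearby
point of `ηⱼ` is still in `H^D`, so it is `xⱼ`, and this bounds the height by `δ` and
`d(x₁, x₂)` by `2δ + 1`.
-/

namespace SimpleGraph.Walk

variable {V : Type} {Γ : SimpleGraph V}

lemma exists_eq_append_of_first (Q : V → Prop) {a b : V} (p : Γ.Walk a b) (hb : Q b) :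
    ∃ (x : V) (η : Γ.Walk a x) (ρ : Γ.Walk x b),
      p = η.append ρ ∧ Q x ∧ ∀ v ∈ η.support.dropLast, ¬ Q v := by
  induction p with
  | nil => exact ⟨_, .nil, .nil, rfl, hb, by simp⟩
  | @cons a c b h q ih =>
    by_cases ha : Q a
    · exact ⟨a, .nil, .cons h q, rfl, ha, by simp⟩
    obtain ⟨x, η, ρ, rfl, hx, havoid⟩ := ih hb
    refine ⟨x, .cons h η, ρ, rfl, hx, ?_⟩
    rw [Walk.support_cons, List.dropLast_cons_of_ne_nil η.support_ne_nil]
    intro v hv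
    rcases List.mem_cons.mp hv with rfl | hv
    exacts [ha, havoid v hv]

end SimpleGraph.Walk

namespace GM

section Geodesic

variable {V : Type} {Γ : SimpleGraph V}

lemma isGeodesic_of_length_le {a b : V} {p : Γ.Walk a b} (h : p.length ≤ Γ.dist a b) :
    IsGeodesic Γ p :=
  le_antisymm h (dist_le p)

lemma IsGeodesic.reverse {a b : V} {p : Γ.Walk a b} (h : IsGeodesic Γ p) :
    IsGeodesic Γ p.reverse := by
  rw [IsGeodesic, Walk.length_reverse, dist_comm]
  exact h

lemma IsGeodesic.of_append {a b c : V} {p : Γ.Walk a b} {q : Γ.Walk b c}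
    (h : IsGeodesic Γ (p.append q)) : IsGeodesic Γ p ∧ IsGeodesic Γ q := by
  have hpq : p.length + q.length = Γ.dist a c := by rw [← Walk.length_append]; exact h
  have := (Walk.reachable p).dist_triangle_left c
  have := dist_le p
  have := dist_le q
  exact ⟨by unfold IsGeodesic; omega, by unfold IsGeodesic; omega⟩

end Geodesic

variable {G ι : Type}

@[simp] lemma depth_atLevel (j : ι) (a : G) (l : ℕ) :
    depth (atLevel j a l : GMVert G ι) = l := by cases l <;> rfl

@[simp] lemma baseElt_atLevel (j : ι) (a : G) (l : ℕ) :
    baseElt (atLevel j a l : GMVert G ι) = a := by cases l <;> rfl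

variable [Group G] {S : Set G} {P : ι → Subgroup G} {i : ι} {g : G}

section Basic

lemma atLevel_mem_horoball {a : G} (ha : g⁻¹ * a ∈ P i) (l : ℕ) :
    atLevel i a l ∈ horoball P i g := by
  cases l
  exacts [ha, ⟨rfl, ha⟩]

lemma inv_mul_mem_of_mem_coset {a b : G} (ha : g⁻¹ * a ∈ P i) (hb : g⁻¹ * b ∈ P i) :
    a⁻¹ * b ∈ P i := by
  simpa [mul_assoc] using (P i).mul_mem ((P i).inv_mem ha) hb

lemma baseElt_mem_of_mem_horoball {v : GMVert G ι} (hv : v ∈ horoball P i g) :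
    g⁻¹ * baseElt v ∈ P i := by
  rcases v with a | ⟨j, a, m⟩
  exacts [hv, hv.2]

lemma exists_eq_atLevel {v : GMVert G ι} {D : ℕ} (hv : v ∈ horoSphere P i g D) :
    ∃ a, g⁻¹ * a ∈ P i ∧ v = atLevel i a D := by
  refine ⟨baseElt v, baseElt_mem_of_mem_horoball hv.1, ?_⟩
  obtain ⟨hvH, rfl⟩ := hv
  rcases v with a | ⟨j, a, ⟨m, hm⟩⟩
  · rfl
  · obtain ⟨rfl, -⟩ := hvH
    obtain ⟨m, rfl⟩ := Nat.exists_eq_add_one_of_ne_zero hm.ne'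
    rfl

lemma depth_adj {u v : GMVert G ι} (h : (GMGraph S P).Adj u v) :
    depth u ≤ depth v + 1 ∧ depth v ≤ depth u + 1 := by
  rcases u with a | ⟨j, a, k⟩ <;> rcases v with b | ⟨j', b, l⟩
  · simp [depth]
  all_goals obtain ⟨-, h⟩ := h
  · simp [depth, h]
  · simp [depth, h]
  · rcases h with ⟨-, h⟩ | ⟨h, -⟩ <;> (simp only [depth]; omega)

lemma baseElt_eq_of_adj_of_depth_ne {u v : GMVert G ι} (h : (GMGraph S P).Adj u v)
    (hne : depth u ≠ depth v) : baseElt u = baseElt v := by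
  rcases u with a | ⟨j, a, k⟩ <;> rcases v with b | ⟨j', b, l⟩
  · exact absurd rfl hne
  · exact h.1
  · exact h.1
  · obtain ⟨-, ⟨h, -⟩ | ⟨h, -⟩⟩ := h
    exacts [h, absurd h hne]

lemma mem_horoball_of_adj {v w : GMVert G ι} (hv : v ∈ horoball P i g) (hdv : 1 ≤ depth v)
    (h : (GMGraph S P).Adj v w) : w ∈ horoball P i g := by
  rcases v with a | ⟨j, a, k⟩
  · exact absurd hdv (by simp [depth])
  obtain ⟨rfl, ha⟩ := hv
  rcases w with b | ⟨j', b, l⟩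
  · obtain ⟨rfl, -⟩ := h
    exact ha
  · obtain ⟨rfl, ⟨rfl, -⟩ | ⟨-, -, hP, -⟩⟩ := h
    · exact ⟨rfl, ha⟩
    · exact ⟨rfl, by simpa [mul_assoc] using (P j).mul_mem ha hP⟩

lemma adj_atLevel_succ (j : ι) (a : G) (m : ℕ) :
    (GMGraph S P).Adj (atLevel j a m) (atLevel j a (m + 1)) := by
  cases m
  exacts [⟨rfl, rfl⟩, ⟨rfl, Or.inl ⟨rfl, Or.inl rfl⟩⟩]

lemma adj_atLevel_of_dist_le {a b : G} (hab : a ≠ b) (hP : a⁻¹ * b ∈ P i)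
    (hr : (cosetGraph S P i).Reachable a b) {L : ℕ} (hd : (cosetGraph S P i).dist a b ≤ 2 ^ L) :
    (GMGraph S P).Adj (atLevel i a L) (atLevel i b L) := by
  cases L with
  | zero =>
    have : (cosetGraph S P i).dist a b = 1 := by
      have := hr.pos_dist_of_ne hab
      rw [pow_zero] at hd
      omega
    exact (dist_eq_one_iff_adj.mp this).1
  | succ L => exact ⟨rfl, Or.inr ⟨rfl, hab, hP, hr, hd⟩⟩

end Basic

section VerticalHorizontal

lemma IsVerticalWalk.reverse {u v : GMVert G ι} {w : (GMGraph S P).Walk u v}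
    (h : IsVerticalWalk w) : IsVerticalWalk w.reverse := by
  intro d hd
  rw [Walk.darts_reverse, List.mem_reverse, List.mem_map] at hd
  obtain ⟨d', hd', rfl⟩ := hd
  exact (h d' hd').symm

variable (S P) in
def upWalk (j : ι) (a : G) (m : ℕ) :
    (s : ℕ) → (GMGraph S P).Walk (atLevel j a m) (atLevel j a (m + s))
  | 0 => .nil
  | s + 1 => (upWalk j a m s).concat (adj_atLevel_succ j a (m + s))

@[simp] lemma length_upWalk (j : ι) (a : G) (m s : ℕ) : (upWalk S P j a m s).length = s := by
  induction s with
  | zero => rfl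
  | succ s ih => simp [upWalk, ih]

lemma isVerticalWalk_upWalk (j : ι) (a : G) (m s : ℕ) : IsVerticalWalk (upWalk S P j a m s) := by
  induction s with
  | zero => simp [IsVerticalWalk, upWalk]
  | succ s ih =>
    intro d hd
    rw [upWalk, Walk.darts_concat, List.concat_eq_append, List.mem_append,
      List.mem_singleton] at hd
    rcases hd with hd | rfl
    exacts [ih d hd, by simp]

lemma mem_horoDeep_of_mem_support_upWalk {a : G} (ha : g⁻¹ * a ∈ P i) {m s : ℕ}
    {v : GMVert G ι} (hv : v ∈ (upWalk S P i a m s).support) : v ∈ horoDeep P i g m := by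
  induction s with
  | zero =>
    obtain rfl : v = atLevel i a m := by simpa [upWalk] using hv
    exact ⟨atLevel_mem_horoball ha m, by simp⟩
  | succ s ih =>
    rw [upWalk, Walk.support_concat, List.mem_append, List.mem_singleton] at hv
    rcases hv with hv | rfl
    exacts [ih hv, ⟨atLevel_mem_horoball ha _, by simp⟩]

lemma inv_mul_mem_of_cosetWalk {a b : G} (w : (cosetGraph S P i).Walk a b) : a⁻¹ * b ∈ P i := by
  induction w with
  | nil => simp
  | cons h _ ih => simpa [mul_assoc] using (P i).mul_mem h.2 ih

lemma exists_horizontal_walk {L : ℕ} (n : ℕ) {a b : G} (w : (cosetGraph S P i).Walk a b)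
    (hw : w.length ≤ n * 2 ^ L) (ha : g⁻¹ * a ∈ P i) :
    ∃ τ : (GMGraph S P).Walk (atLevel i a L) (atLevel i b L), IsHorizontalWalk τ ∧
      τ.length ≤ n ∧ ∀ v ∈ τ.support, v ∈ horoball P i g ∧ depth v = L := by
  induction n generalizing a with
  | zero =>
    obtain rfl := Walk.eq_of_length_eq_zero (Nat.le_zero.mp (by simpa using hw))
    refine ⟨.nil, by simp [IsHorizontalWalk], by simp, ?_⟩
    simp only [Walk.support_nil, List.mem_singleton, forall_eq]
    exact ⟨atLevel_mem_horoball ha L, depth_atLevel i a L⟩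
  | succ n ih =>
    obtain ⟨c, w₁, w₂, hw₁, hw₂⟩ : ∃ (c : G) (w₁ : (cosetGraph S P i).Walk a c)
        (w₂ : (cosetGraph S P i).Walk c b), w₁.length ≤ 2 ^ L ∧ w₂.length ≤ n * 2 ^ L :=
      ⟨_, w.take (2 ^ L), w.drop (2 ^ L), by simp, by simp [Nat.succ_mul] at hw ⊢; omega⟩
    have hc : g⁻¹ * c ∈ P i := by
      simpa [mul_assoc] using (P i).mul_mem ha (inv_mul_mem_of_cosetWalk w₁)
    obtain ⟨τ, hτ, hτn, hτH⟩ := ih w₂ hw₂ hc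
    by_cases hac : a = c
    · subst hac
      exact ⟨τ, hτ, by omega, hτH⟩
    have hadj : (GMGraph S P).Adj (atLevel i a L) (atLevel i c L) :=
      adj_atLevel_of_dist_le hac (inv_mul_mem_of_cosetWalk w₁) ⟨w₁⟩ ((dist_le w₁).trans hw₁)
    refine ⟨.cons hadj τ, ?_, by simpa using hτn, ?_⟩
    · intro d hd
      rw [Walk.darts_cons, List.mem_cons] at hd
      rcases hd with rfl | hd
      exacts [by simp, hτ d hd]
    · intro v hv
      rw [Walk.support_cons, List.mem_cons] at hv
      rcases hv with rfl | hv
      exacts [⟨atLevel_mem_horoball ha L, by simp⟩, hτH v hv]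

end VerticalHorizontal

section Counting

def numHoriz {u v : GMVert G ι} (p : (GMGraph S P).Walk u v) : ℕ :=
  p.darts.countP (fun d => depth d.fst = depth d.snd)

@[simp] lemma numHoriz_nil {u : GMVert G ι} : numHoriz (.nil : (GMGraph S P).Walk u u) = 0 := rfl

lemma numHoriz_cons {u m v : GMVert G ι} (h : (GMGraph S P).Adj u m) (q : (GMGraph S P).Walk m v) :
    numHoriz (.cons h q) = numHoriz q + if depth u = depth m then 1 else 0 := by
  simp [numHoriz, List.countP_cons]

lemma numHoriz_append {u v w : GMVert G ι} (p : (GMGraph S P).Walk u v)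
    (q : (GMGraph S P).Walk v w) : numHoriz (p.append q) = numHoriz p + numHoriz q := by
  simp [numHoriz, Walk.darts_append, List.countP_append]

lemma depth_add_numHoriz_le {u v : GMVert G ι} (p : (GMGraph S P).Walk u v) :
    depth v + numHoriz p ≤ depth u + p.length ∧ depth u + numHoriz p ≤ depth v + p.length := by
  induction p with
  | nil => simp
  | cons h q ih =>
    have := depth_adj h
    rw [numHoriz_cons, Walk.length_cons]
    split_ifs <;> omega

lemma depth_le_depth_add_dist (hX : (GMGraph S P).Connected) (u v : GMVert G ι) :
    depth v ≤ depth u + (GMGraph S P).dist u v := by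
  obtain ⟨p, hp⟩ := hX.exists_walk_length_eq_dist u v
  have := (depth_add_numHoriz_le p).1
  omega

lemma baseElt_eq_of_length_add_depth_le {u v : GMVert G ι} (p : (GMGraph S P).Walk u v)
    (hp : p.length + depth v ≤ depth u) : baseElt u = baseElt v := by
  induction p with
  | nil => rfl
  | cons h q ih =>
    rw [Walk.length_cons] at hp
    have := depth_adj h
    have := (depth_add_numHoriz_le q).2
    rw [baseElt_eq_of_adj_of_depth_ne h (by omega)]
    exact ih (by omega)

lemma adj_cases_of_mem_horoball {u v : GMVert G ι} (hu : u ∈ horoball P i g)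
    (hv : v ∈ horoball P i g) (h : (GMGraph S P).Adj u v) :
    baseElt u = baseElt v ∨
      depth u = depth v ∧ (cosetGraph S P i).Reachable (baseElt u) (baseElt v) ∧
        (cosetGraph S P i).dist (baseElt u) (baseElt v) ≤ 2 ^ depth u := by
  rcases u with a | ⟨j, a, k⟩ <;> rcases v with b | ⟨j', b, l⟩
  · have hadj : (cosetGraph S P i).Adj a b :=
      ⟨h, inv_mul_mem_of_mem_coset hu hv⟩
    exact Or.inr ⟨rfl, hadj.reachable, by simp [baseElt, depth, dist_eq_one_iff_adj.mpr hadj]⟩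
  · exact Or.inl h.1
  · exact Or.inl h.1
  · obtain ⟨rfl, -⟩ := hu
    obtain ⟨rfl, -⟩ := hv
    obtain ⟨-, ⟨h, -⟩ | ⟨hkl, -, -, hr, hd⟩⟩ := h
    exacts [Or.inl h, Or.inr ⟨hkl, hr, hd⟩]

lemma exists_cosetWalk_length_le {u v : GMVert G ι} (p : (GMGraph S P).Walk u v)
    (hH : ∀ w ∈ p.support, w ∈ horoball P i g) {K : ℕ} (hK : ∀ w ∈ p.support, depth w ≤ K) :
    ∃ c : (cosetGraph S P i).Walk (baseElt u) (baseElt v), c.length ≤ numHoriz p * 2 ^ K := by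
  induction p with
  | nil => exact ⟨.nil, by simp⟩
  | @cons u m v h q ih =>
    simp only [Walk.support_cons, List.mem_cons, forall_eq_or_imp] at hH hK
    obtain ⟨c, hc⟩ := ih hH.2 hK.2
    rw [numHoriz_cons]
    rcases adj_cases_of_mem_horoball hH.1 (hH.2 m q.start_mem_support) h with
      hb | ⟨hum, hr, hd⟩
    · exact ⟨c.copy hb.symm rfl,
        by simpa using hc.trans (Nat.mul_le_mul_right _ (Nat.le_add_right _ _))⟩
    obtain ⟨c₀, hc₀⟩ := hr.exists_walk_length_eq_dist
    have h2K : 2 ^ depth u ≤ 2 ^ K := Nat.pow_le_pow_right two_pos hK.1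
    refine ⟨c₀.append c, ?_⟩
    rw [Walk.length_append, if_pos hum, add_one_mul]
    omega

lemma exists_two_mul_add_ceilDiv_le_length {u v : GMVert G ι} (p : (GMGraph S P).Walk u v)
    (hH : ∀ w ∈ p.support, w ∈ horoball P i g) {D : ℕ} (hu : depth u = D) (hv : depth v = D) :
    ∃ k, 2 * k + (cosetGraph S P i).dist (baseElt u) (baseElt v) ⌈/⌉ 2 ^ (D + k) ≤ p.length := by
  classical
  obtain ⟨z, hz, hmax⟩ := p.support.toFinset.exists_max_image depth ⟨u, by simp⟩
  rw [List.mem_toFinset] at hz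
  simp only [List.mem_toFinset] at hmax
  have hDz : D ≤ depth z := hu ▸ hmax u p.start_mem_support
  -- Both halves of `p` at a deepest point `z` need `depth z - D` vertical edges, and the
  -- horizontal edges, each spanning coset distance at most `2 ^ depth z`, must cover the
  -- coset distance of the endpoints.
  refine ⟨depth z - D, ?_⟩
  obtain ⟨c, hc⟩ := exists_cosetWalk_length_le p hH hmax
  have hceil : (cosetGraph S P i).dist (baseElt u) (baseElt v) ⌈/⌉ 2 ^ (D + (depth z - D))
      ≤ numHoriz p := by
    rw [Nat.add_sub_cancel' hDz, ceilDiv_le_iff_le_mul (by positivity), mul_comm]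
    exact (dist_le c).trans hc
  have hsplit := p.take_spec hz
  have hlen : p.length = (p.takeUntil z hz).length + (p.dropUntil z hz).length := by
    rw [← Walk.length_append, hsplit]
  have hnum : numHoriz p = numHoriz (p.takeUntil z hz) + numHoriz (p.dropUntil z hz) := by
    rw [← numHoriz_append, hsplit]
  have h₁ := (depth_add_numHoriz_le (p.takeUntil z hz)).1
  have h₂ := (depth_add_numHoriz_le (p.dropUntil z hz)).2
  omega

end Counting

section Optimization

lemma ceilDiv_two_pow_succ_le (d n : ℕ) : d ⌈/⌉ 2 ^ (n + 1) ≤ (d ⌈/⌉ 2 ^ n + 1) / 2 := by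
  rw [ceilDiv_le_iff_le_mul (by positivity)]
  calc d ≤ 2 ^ n * (d ⌈/⌉ 2 ^ n) := (ceilDiv_le_iff_le_mul (by positivity)).mp le_rfl
    _ ≤ 2 ^ n * (2 * ((d ⌈/⌉ 2 ^ n + 1) / 2)) := Nat.mul_le_mul_left _ (by omega)
    _ = 2 ^ (n + 1) * ((d ⌈/⌉ 2 ^ n + 1) / 2) := by ring

lemma exists_optimal_height (d D : ℕ) :
    ∃ s, d ⌈/⌉ 2 ^ (D + s) ≤ 3 ∧
      ∀ k, 2 * s + d ⌈/⌉ 2 ^ (D + s) ≤ 2 * k + d ⌈/⌉ 2 ^ (D + k) := by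
  have hex : ∃ s, d ⌈/⌉ 2 ^ (D + s) ≤ 3 := by
    refine ⟨d, (ceilDiv_le_iff_le_mul (by positivity)).mpr ?_⟩
    have := Nat.lt_two_pow_self (n := d)
    have := Nat.pow_le_pow_right two_pos (Nat.le_add_left d D)
    omega
  refine ⟨Nat.find hex, Nat.find_spec hex, fun k => ?_⟩
  rcases le_or_gt k (Nat.find hex) with hk | hk
  · induction hk using Nat.decreasingInduction with
    | self => exact le_rfl
    | of_succ k hk ih =>
      have hbig := Nat.find_min hex hk
      have := ceilDiv_two_pow_succ_le d (D + k)
      rw [← add_assoc] at ih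
      omega
  · rcases Nat.eq_zero_or_pos d with hd | hd
    · have : d ⌈/⌉ 2 ^ (D + Nat.find hex) ≤ 0 :=
        (ceilDiv_le_iff_le_mul (by positivity)).mpr (by omega)
      omega
    have : 0 < d ⌈/⌉ 2 ^ (D + k) := by
      by_contra h0
      rw [not_lt, ceilDiv_le_iff_le_mul (by positivity)] at h0
      omega
    have := Nat.find_spec hex
    omega

end Optimization

section Connectivity

lemma reachable_mul_of_mem_closure {V : Type} {Γ : SimpleGraph V} (f : G → V) {T : Set G}
    (hT : ∀ x ∈ T, ∀ a, x ≠ 1 → Γ.Adj (f a) (f (a * x))) {x : G}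
    (hx : x ∈ Subgroup.closure T) (a : G) : Γ.Reachable (f a) (f (a * x)) := by
  induction hx using Subgroup.closure_induction generalizing a with
  | mem x hx =>
    by_cases hx1 : x = 1
    · simp [hx1]
    · exact (hT x hx a hx1).reachable
  | one => simp
  | mul x y _ _ hx hy => exact (hx a).trans (by simpa [mul_assoc] using hy (a * x))
  | inv x _ hx => simpa using (hx (a * x⁻¹)).symm

lemma cosetGraph_reachable (hPgen : Subgroup.closure (S ∩ (P i : Set G)) = P i) {a b : G}
    (hab : a⁻¹ * b ∈ P i) : (cosetGraph S P i).Reachable a b := by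
  have hT : ∀ x ∈ S ∩ (P i : Set G), ∀ a : G, x ≠ 1 → (cosetGraph S P i).Adj a (a * x) :=
    fun x hx a hx1 => ⟨⟨by simpa using hx1, Or.inl (by simpa using hx.1)⟩,
      by simpa using hx.2⟩
  have := reachable_mul_of_mem_closure id hT (hPgen.symm ▸ hab) a
  rwa [id, id, mul_inv_cancel_left] at this

lemma connected_of_closure_eq_top (hSgen : Subgroup.closure S = ⊤) :
    (GMGraph S P).Connected := by
  have hbase : ∀ v : GMVert G ι, (GMGraph S P).Reachable (.inl (baseElt v)) v := by
    have hup : ∀ (j : ι) (a : G) (k : ℕ),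
        (GMGraph S P).Reachable (atLevel j a 0) (atLevel j a k) := fun j a k =>
      ⟨upWalk S P j a 0 k |>.copy rfl (by rw [zero_add])⟩
    rintro (a | ⟨j, a, ⟨k, hk⟩⟩)
    · rfl
    · obtain ⟨k, rfl⟩ := Nat.exists_eq_add_one_of_ne_zero hk.ne'
      exact hup j a (k + 1)
  have hT : ∀ x ∈ S, ∀ a : G, x ≠ 1 → (GMGraph S P).Adj (.inl a) (.inl (a * x)) :=
    fun x hx a hx1 => ⟨by simpa using hx1, Or.inl (by simpa using hx)⟩
  refine (connected_iff _).mpr ⟨fun u v => ?_, ⟨.inl 1⟩⟩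
  have hG := reachable_mul_of_mem_closure Sum.inl hT
    (hSgen.symm ▸ Subgroup.mem_top ((baseElt u)⁻¹ * baseElt v)) (baseElt u)
  rw [mul_inv_cancel_left] at hG
  exact ((hbase u).symm.trans hG).trans (hbase v)

end Connectivity

section TightGeodesics

variable {δ D : ℕ}

lemma mem_horoball_of_walk {u v : GMVert G ι} (p : (GMGraph S P).Walk u v)
    (hu : u ∈ horoball P i g) (hp : p.length ≤ depth u) : v ∈ horoball P i g := by
  induction p with
  | nil => exact hu
  | cons h q ih =>
    rw [Walk.length_cons] at hp
    have := depth_adj h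
    exact ih (mem_horoball_of_adj hu (by omega) h) (by omega)

lemma mem_horoDeep_of_dist_le (hX : (GMGraph S P).Connected) {w z : GMVert G ι}
    (hw : w ∈ horoball P i g) (h : (GMGraph S P).dist w z + D ≤ depth w) :
    z ∈ horoDeep P i g D := by
  obtain ⟨r, hr⟩ := hX.exists_walk_length_eq_dist w z
  have := (depth_add_numHoriz_le r).2
  exact ⟨mem_horoball_of_walk r hw (by omega), by omega⟩

lemma mem_horoball_of_isGeodesic (hX : (GMGraph S P).Connected)
    (hPgen : Subgroup.closure (S ∩ (P i : Set G)) = P i)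
    (hhyp : SlimTriangles (GMGraph S P) δ) (hδD : δ ≤ D) {a b : G}
    (ha : g⁻¹ * a ∈ P i) (hb : g⁻¹ * b ∈ P i)
    (ρ : (GMGraph S P).Walk (atLevel i a D) (atLevel i b D))
    (hρ : IsGeodesic (GMGraph S P) ρ) : ∀ z ∈ ρ.support, z ∈ horoball P i g := by
  by_cases hab : a = b
  · subst hab
    have : ρ.Nil := Walk.length_eq_zero_iff.mp (by rw [hρ, dist_self])
    rw [Walk.eq_nil_iff_nil.mpr this]
    simpa using atLevel_mem_horoball ha D
  have hPab := inv_mul_mem_of_mem_coset ha hb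
  have hr := cosetGraph_reachable hPgen hPab
  set d₀ := (cosetGraph S P i).dist a b
  have hd₀ : 0 < d₀ := hr.pos_dist_of_ne hab
  have hedge : (GMGraph S P).Adj (atLevel i a (D + d₀)) (atLevel i b (D + d₀)) :=
    adj_atLevel_of_dist_le hab hPab hr <|
      (Nat.lt_two_pow_self).le.trans (Nat.pow_le_pow_right two_pos (Nat.le_add_left _ _))
  let p := upWalk S P i a D d₀
  let q := Walk.cons hedge (upWalk S P i b D d₀).reverse
  have hp : IsGeodesic (GMGraph S P) p := isGeodesic_of_length_le <| by
    simpa [p] using depth_le_depth_add_dist hX (atLevel i a D) (atLevel i a (D + d₀))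
  have hq : IsGeodesic (GMGraph S P) q := isGeodesic_of_length_le <| by
    obtain ⟨r, hr⟩ := hX.exists_walk_length_eq_dist (atLevel i a (D + d₀)) (atLevel i b D)
    have := (depth_add_numHoriz_le r).2
    have hsteep : ¬ r.length + D ≤ D + d₀ := fun h =>
      hab (by simpa using baseElt_eq_of_length_add_depth_le r (by simpa using h))
    simp only [depth_atLevel] at this
    simp only [q, Walk.length_cons, Walk.length_reverse, length_upWalk]
    omega
  suffices h : ∀ w ∈ horoDeep P i g D, ∀ z, (GMGraph S P).dist z w ≤ δ → z ∈ horoball P i g by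
    intro z hz
    rcases hhyp p q ρ hp hq hρ z hz with ⟨w, hw, hzw⟩ | ⟨w, hw, hzw⟩
    · exact h w (mem_horoDeep_of_mem_support_upWalk ha hw) z hzw
    · rw [Walk.support_cons, List.mem_cons, Walk.support_reverse, List.mem_reverse] at hw
      rcases hw with rfl | hw
      · exact h _ ⟨atLevel_mem_horoball ha _, by simp⟩ z hzw
      · exact h w (mem_horoDeep_of_mem_support_upWalk hb hw) z hzw
  intro w hw z hzw
  exact (mem_horoDeep_of_dist_le hX hw.1 (D := 0) (by rw [dist_comm]; have := hw.2; omega)).1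

lemma exists_tight_geodesic (hX : (GMGraph S P).Connected)
    (hPgen : Subgroup.closure (S ∩ (P i : Set G)) = P i)
    (hhyp : SlimTriangles (GMGraph S P) δ) (hδD : δ ≤ D) {a b : G}
    (ha : g⁻¹ * a ∈ P i) (hb : g⁻¹ * b ∈ P i) :
    ∃ (s : ℕ) (τ : (GMGraph S P).Walk (atLevel i a (D + s)) (atLevel i b (D + s))),
      IsHorizontalWalk τ ∧ τ.length ≤ 3 ∧
      (∀ v ∈ τ.support, v ∈ horoball P i g ∧ depth v = D + s) ∧
      IsGeodesic (GMGraph S P)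
        ((upWalk S P i a D s).append (τ.append (upWalk S P i b D s).reverse)) := by
  have hPab := inv_mul_mem_of_mem_coset ha hb
  obtain ⟨c, hc⟩ := (cosetGraph_reachable hPgen hPab).exists_walk_length_eq_dist
  obtain ⟨s, hs3, hmin⟩ := exists_optimal_height ((cosetGraph S P i).dist a b) D
  obtain ⟨τ, hτ, hτlen, hτH⟩ := exists_horizontal_walk (L := D + s) _ c
    (by rw [hc, mul_comm]; exact (ceilDiv_le_iff_le_mul (by positivity)).mp le_rfl) ha
  obtain ⟨ρ, hρ⟩ := hX.exists_walk_length_eq_dist (atLevel i a D) (atLevel i b D)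
  obtain ⟨k, hk⟩ := exists_two_mul_add_ceilDiv_le_length ρ
    (mem_horoball_of_isGeodesic hX hPgen hhyp hδD ha hb ρ hρ) (depth_atLevel ..)
    (depth_atLevel ..)
  simp only [baseElt_atLevel] at hk
  refine ⟨s, τ, hτ, hτlen.trans hs3, hτH, isGeodesic_of_length_le ?_⟩
  have := hmin k
  simp only [Walk.length_append, Walk.length_reverse, length_upWalk]
  omega

end TightGeodesics

section Entry

variable {δ D : ℕ}

lemma notMem_horoDeep_of_adj {u m : GMVert G ι} (h : (GMGraph S P).Adj u m)
    (hu : u ∉ horoDeep P i g D) (hm : m ∉ horoSphere P i g D) : m ∉ horoDeep P i g D := by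
  rintro ⟨hmH, hmD⟩
  have hmD' : D < depth m := lt_of_le_of_ne hmD fun h => hm ⟨hmH, h.symm⟩
  have := depth_adj h
  exact hu ⟨mem_horoball_of_adj hmH (by omega) h.symm, by omega⟩

lemma notMem_horoDeep_of_mem_dropLast {u v : GMVert G ι} (p : (GMGraph S P).Walk u v)
    (hu : u ∉ horoDeep P i g D) (havoid : ∀ w ∈ p.support.dropLast, w ∉ horoSphere P i g D) :
    ∀ w ∈ p.support.dropLast, w ∉ horoDeep P i g D := by
  induction p with
  | nil => simp
  | @cons u m v h q ih =>
    rw [Walk.support_cons, List.dropLast_cons_of_ne_nil q.support_ne_nil] at havoid ⊢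
    intro w hw
    rcases List.mem_cons.mp hw with rfl | hw
    · exact hu
    have hm : m ∈ q.support.dropLast := by
      cases q with
      | nil => simp at hw
      | cons => simp [List.dropLast_cons_of_ne_nil]
    exact ih (notMem_horoDeep_of_adj h hu (havoid m (List.mem_cons_of_mem _ hm)))
      (fun w hw => havoid w (List.mem_cons_of_mem _ hw)) w hw

lemma eq_of_mem_support_of_mem_horoDeep (hD : 1 ≤ D) {x : GMVert G ι}
    (η : (GMGraph S P).Walk idv x) (havoid : ∀ v ∈ η.support.dropLast, v ∉ horoSphere P i g D)
    {y : GMVert G ι} (hy : y ∈ η.support) (hyD : y ∈ horoDeep P i g D) : y = x := by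
  rw [← η.dropLast_support_concat, List.mem_append, List.mem_singleton] at hy
  refine hy.resolve_left fun hy => notMem_horoDeep_of_mem_dropLast η ?_ havoid y hy hyD
  exact fun h => Nat.not_succ_le_zero 0 (hD.trans h.2)

variable (hX : (GMGraph S P).Connected) (hhyp : SlimTriangles (GMGraph S P) δ) (hD : 1 ≤ D)
  {x₁ x₂ : GMVert G ι} {η₁ : (GMGraph S P).Walk idv x₁} {η₂ : (GMGraph S P).Walk idv x₂}
  (hη₁ : IsGeodesic (GMGraph S P) η₁) (hη₂ : IsGeodesic (GMGraph S P) η₂)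
  (havoid₁ : ∀ v ∈ η₁.support.dropLast, v ∉ horoSphere P i g D)
  (havoid₂ : ∀ v ∈ η₂.support.dropLast, v ∉ horoSphere P i g D)
include hX hhyp hD hη₁ hη₂ havoid₁ havoid₂

lemma dist_le_of_mem_support_of_deep (γ : (GMGraph S P).Walk x₁ x₂)
    (hγ : IsGeodesic (GMGraph S P) γ) {w : GMVert G ι} (hw : w ∈ γ.support)
    (hwH : w ∈ horoball P i g) (hwD : D + δ ≤ depth w) :
    (GMGraph S P).dist x₁ w ≤ δ ∨ (GMGraph S P).dist w x₂ ≤ δ := by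
  have hdeep : ∀ y, (GMGraph S P).dist w y ≤ δ → y ∈ horoDeep P i g D :=
    fun y hy => mem_horoDeep_of_dist_le hX hwH (by omega)
  rcases hhyp η₁.reverse η₂ γ hη₁.reverse hη₂ hγ w hw with ⟨y, hy, hwy⟩ | ⟨y, hy, hwy⟩
  · rw [Walk.support_reverse, List.mem_reverse] at hy
    obtain rfl := eq_of_mem_support_of_mem_horoDeep hD η₁ havoid₁ hy (hdeep y hwy)
    exact Or.inl (dist_comm.trans_le hwy)
  · obtain rfl := eq_of_mem_support_of_mem_horoDeep hD η₂ havoid₂ hy (hdeep y hwy)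
    exact Or.inr hwy

lemma dist_le_of_entry (hPgen : Subgroup.closure (S ∩ (P i : Set G)) = P i) (hδD : δ ≤ D)
    (hx₁ : x₁ ∈ horoSphere P i g D) (hx₂ : x₂ ∈ horoSphere P i g D) :
    (GMGraph S P).dist x₁ x₂ ≤ 2 * δ + 1 := by
  obtain ⟨a₁, ha₁, rfl⟩ := exists_eq_atLevel hx₁
  obtain ⟨a₂, ha₂, rfl⟩ := exists_eq_atLevel hx₂
  obtain ⟨s, τ, -, hτ3, hτH, hγ⟩ := exists_tight_geodesic hX hPgen hhyp hδD ha₁ ha₂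
  by_cases hτ : τ.Nil
  · obtain rfl : a₁ = a₂ := by simpa using congrArg baseElt hτ.eq
    simp
  obtain ⟨m, h, τ', rfl⟩ := Walk.not_nil_iff.mp hτ
  rw [Walk.cons_append, ← Walk.concat_append] at hγ
  obtain ⟨hγ₁, hγ₂⟩ := hγ.of_append
  have hm : m ∈ (((upWalk S P i a₁ D s).concat h).append
      (τ'.append (upWalk S P i a₂ D s).reverse)).support :=
    (Walk.mem_support_append_iff _ _).mpr (Or.inl (Walk.end_mem_support _))
  have hmτ := hτH m (List.mem_cons_of_mem _ τ'.start_mem_support)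
  have hclose := fun hs : δ ≤ s =>
    dist_le_of_mem_support_of_deep hX hhyp hD hη₁ hη₂ havoid₁ havoid₂ _ hγ hm hmτ.1 (by omega)
  unfold IsGeodesic at hγ hγ₁ hγ₂
  simp only [Walk.length_append, Walk.length_concat, Walk.length_reverse, length_upWalk,
    Walk.length_cons] at hγ hγ₁ hγ₂ hτ3
  by_cases hs : δ ≤ s
  · rcases hclose hs with h₁ | h₂ <;> omega
  · omega

end Entry

lemma exists_geodesic_through_entry {δ D : ℕ} (hX : (GMGraph S P).Connected)
    (hPgen : Subgroup.closure (S ∩ (P i : Set G)) = P i)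
    (hhyp : SlimTriangles (GMGraph S P) δ) (hδD : δ ≤ D) {t : GMVert G ι}
    (ht : t ∈ horoSphere P i g D) :
    ∃ (x u w : GMVert G ι) (η : (GMGraph S P).Walk idv x) (α : (GMGraph S P).Walk x u)
      (τ : (GMGraph S P).Walk u w) (β : (GMGraph S P).Walk w t),
      IsGeodesic (GMGraph S P) η ∧
      IsGeodesic (GMGraph S P) (η.append (α.append (τ.append β))) ∧
      x ∈ horoSphere P i g D ∧ (∀ v ∈ η.support.dropLast, v ∉ horoSphere P i g D) ∧
      IsVerticalWalk α ∧ IsVerticalWalk β ∧ α.length = β.length ∧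
      (∀ v ∈ α.support, v ∈ horoDeep P i g D) ∧ (∀ v ∈ β.support, v ∈ horoDeep P i g D) ∧
      IsHorizontalWalk τ ∧ τ.length ≤ 3 ∧ (∀ v ∈ τ.support, v ∈ horoDeep P i g D) := by
  obtain ⟨b, hb, rfl⟩ := exists_eq_atLevel ht
  obtain ⟨p, hp⟩ := hX.exists_walk_length_eq_dist idv (atLevel i b D)
  obtain ⟨x, η, ρ, rfl, hx, havoid⟩ := p.exists_eq_append_of_first (· ∈ horoSphere P i g D) ht
  obtain ⟨hη, hρ⟩ := IsGeodesic.of_append hp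
  obtain ⟨a, ha, rfl⟩ := exists_eq_atLevel hx
  obtain ⟨s, τ, hτ, hτ3, hτH, hγ⟩ := exists_tight_geodesic hX hPgen hhyp hδD ha hb
  refine ⟨_, _, _, η, upWalk S P i a D s, τ, (upWalk S P i b D s).reverse, hη, ?_, hx, havoid,
    isVerticalWalk_upWalk i a D s, (isVerticalWalk_upWalk i b D s).reverse, by simp,
    fun v hv => mem_horoDeep_of_mem_support_upWalk ha hv,
    fun v hv => mem_horoDeep_of_mem_support_upWalk hb (by simpa using hv), hτ, hτ3,
    fun v hv => ⟨(hτH v hv).1, (hτH v hv).2 ▸ Nat.le_add_right D s⟩⟩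
  refine isGeodesic_of_length_le ?_
  rw [Walk.length_append, hγ, ← hρ, ← Walk.length_append, hp]

end GM

open GM in
theorem statement_1_general {G : Type} [Group G] {ι : Type}
    (S : Finset G) (P : ι → Subgroup G)
    (hSgen : Subgroup.closure (S : Set G) = ⊤)
    (hPgen : ∀ i, Subgroup.closure ((S : Set G) ∩ (P i : Set G)) = P i)
    (δ : ℕ) (hδ : 1 ≤ δ) (hhyp : SlimTriangles (GMGraph (S : Set G) P) δ)
    (i : ι) (g : G) (dbar : ℕ) (hd : δ ≤ dbar)
    (t₁ t₂ : GMVert G ι)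
    (ht₁ : t₁ ∈ horoball P i g) (ht₁d : depth t₁ = dbar)
    (ht₂ : t₂ ∈ horoball P i g) (ht₂d : depth t₂ = dbar) :
    ∃ (x₁ u₁ w₁ : GMVert G ι)
      (η₁ : (GMGraph (S : Set G) P).Walk idv x₁)
      (α₁ : (GMGraph (S : Set G) P).Walk x₁ u₁)
      (τ₁ : (GMGraph (S : Set G) P).Walk u₁ w₁)
      (β₁ : (GMGraph (S : Set G) P).Walk w₁ t₁)
      (x₂ u₂ w₂ : GMVert G ι)
      (η₂ : (GMGraph (S : Set G) P).Walk idv x₂)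
      (α₂ : (GMGraph (S : Set G) P).Walk x₂ u₂)
      (τ₂ : (GMGraph (S : Set G) P).Walk u₂ w₂)
      (β₂ : (GMGraph (S : Set G) P).Walk w₂ t₂),
      -- `γ₁ = (η₁, α₁, τ₁, β₁)` is a geodesic from `*` to `t₁`:
      IsGeodesic (GMGraph (S : Set G) P) (η₁.append (α₁.append (τ₁.append β₁))) ∧
      -- `x₁` is the first point of `γ₁` in `H(dbar)`:
      x₁ ∈ horoSphere P i g dbar ∧
      (∀ v ∈ η₁.support.dropLast, v ∉ horoSphere P i g dbar) ∧
      -- `α₁` and `β₁` are vertical, of the same length, contained in `H^dbar`: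
      IsVerticalWalk α₁ ∧ IsVerticalWalk β₁ ∧ α₁.length = β₁.length ∧
      (∀ v ∈ α₁.support, v ∈ horoDeep P i g dbar) ∧
      (∀ v ∈ β₁.support, v ∈ horoDeep P i g dbar) ∧
      -- `τ₁` is horizontal of length at most 3, contained in `H^dbar`:
      IsHorizontalWalk τ₁ ∧ τ₁.length ≤ 3 ∧
      (∀ v ∈ τ₁.support, v ∈ horoDeep P i g dbar) ∧
      -- likewise for `γ₂ = (η₂, α₂, τ₂, β₂)`:
      IsGeodesic (GMGraph (S : Set G) P) (η₂.append (α₂.append (τ₂.append β₂))) ∧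
      x₂ ∈ horoSphere P i g dbar ∧
      (∀ v ∈ η₂.support.dropLast, v ∉ horoSphere P i g dbar) ∧
      IsVerticalWalk α₂ ∧ IsVerticalWalk β₂ ∧ α₂.length = β₂.length ∧
      (∀ v ∈ α₂.support, v ∈ horoDeep P i g dbar) ∧
      (∀ v ∈ β₂.support, v ∈ horoDeep P i g dbar) ∧
      IsHorizontalWalk τ₂ ∧ τ₂.length ≤ 3 ∧
      (∀ v ∈ τ₂.support, v ∈ horoDeep P i g dbar) ∧
      -- furthermore `d(x₁, x₂) ≤ 2δ + 1`:
      (GMGraph (S : Set G) P).dist x₁ x₂ ≤ 2 * δ + 1 := by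
  have hX := connected_of_closure_eq_top (P := P) hSgen
  obtain ⟨x₁, u₁, w₁, η₁, α₁, τ₁, β₁, hη₁, hγ₁, hx₁, hav₁, hα₁, hβ₁, hαβ₁, hαD₁, hβD₁, hτ₁,
    hτ3₁, hτD₁⟩ := exists_geodesic_through_entry hX (hPgen i) hhyp hd ⟨ht₁, ht₁d⟩
  obtain ⟨x₂, u₂, w₂, η₂, α₂, τ₂, β₂, hη₂, hγ₂, hx₂, hav₂, hα₂, hβ₂, hαβ₂, hαD₂, hβD₂, hτ₂,
    hτ3₂, hτD₂⟩ := exists_geodesic_through_entry hX (hPgen i) hhyp hd ⟨ht₂, ht₂d⟩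
  exact ⟨x₁, u₁, w₁, η₁, α₁, τ₁, β₁, x₂, u₂, w₂, η₂, α₂, τ₂, β₂,
    hγ₁, hx₁, hav₁, hα₁, hβ₁, hαβ₁, hαD₁, hβD₁, hτ₁, hτ3₁, hτD₁,
    hγ₂, hx₂, hav₂, hα₂, hβ₂, hαβ₂, hαD₂, hβD₂, hτ₂, hτ3₂, hτD₂,
    dist_le_of_entry hX hhyp (hδ.trans hd) hη₁ hη₂ hav₁ hav₂ (hPgen i) hd hx₁ hx₂⟩

open GM in
/-- Lemma "tight".  Suppose `t₁` and `t₂` are vertices of depth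
`dbar ≥ δ` lying in a single horoball `H` of the Groves–Manning space `X`.  Then for each
`i ∈ {1,2}` there is a geodesic `γᵢ` from `*` to `tᵢ` of the form `(ηᵢ, αᵢ, τᵢ, βᵢ)`,
where the endpoint `xᵢ` of `ηᵢ` is the first point of `γᵢ` in `H(dbar)`, `αᵢ` and `βᵢ`
are vertical segments of the same length contained in `H^dbar`, and `τᵢ` is a horizontal
segment of length `≤ 3`.  Furthermore `d(x₁,x₂) ≤ 2δ + 1`. -/
theorem statement_1 {G : Type} [Group G] {ι : Type} [Fintype ι]
    (S : Finset G) (P : ι → Subgroup G)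
    (hSgen : Subgroup.closure (S : Set G) = ⊤)
    (hPgen : ∀ i, Subgroup.closure ((S : Set G) ∩ (P i : Set G)) = P i)
    (hProper : ∀ i, P i ≠ ⊤)
    (δ : ℕ) (hδ : 1 ≤ δ) (hhyp : SlimTriangles (GMGraph (S : Set G) P) δ)
    (i : ι) (g : G) (dbar : ℕ) (hd : δ ≤ dbar)
    (t₁ t₂ : GMVert G ι)
    (ht₁ : t₁ ∈ horoball P i g) (ht₁d : depth t₁ = dbar)
    (ht₂ : t₂ ∈ horoball P i g) (ht₂d : depth t₂ = dbar) :
    ∃ (x₁ u₁ w₁ : GMVert G ι)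
      (η₁ : (GMGraph (S : Set G) P).Walk idv x₁)
      (α₁ : (GMGraph (S : Set G) P).Walk x₁ u₁)
      (τ₁ : (GMGraph (S : Set G) P).Walk u₁ w₁)
      (β₁ : (GMGraph (S : Set G) P).Walk w₁ t₁)
      (x₂ u₂ w₂ : GMVert G ι)
      (η₂ : (GMGraph (S : Set G) P).Walk idv x₂)
      (α₂ : (GMGraph (S : Set G) P).Walk x₂ u₂)
      (τ₂ : (GMGraph (S : Set G) P).Walk u₂ w₂)
      (β₂ : (GMGraph (S : Set G) P).Walk w₂ t₂),
      -- `γ₁ = (η₁, α₁, τ₁, β₁)` is a geodesic from `*` to `t₁`: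
      IsGeodesic (GMGraph (S : Set G) P) (η₁.append (α₁.append (τ₁.append β₁))) ∧
      -- `x₁` is the first point of `γ₁` in `H(dbar)`:
      x₁ ∈ horoSphere P i g dbar ∧
      (∀ v ∈ η₁.support.dropLast, v ∉ horoSphere P i g dbar) ∧
      -- `α₁` and `β₁` are vertical, of the same length, contained in `H^dbar`:
      IsVerticalWalk α₁ ∧ IsVerticalWalk β₁ ∧ α₁.length = β₁.length ∧
      (∀ v ∈ α₁.support, v ∈ horoDeep P i g dbar) ∧
      (∀ v ∈ β₁.support, v ∈ horoDeep P i g dbar) ∧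
      -- `τ₁` is horizontal of length at most 3, contained in `H^dbar`:
      IsHorizontalWalk τ₁ ∧ τ₁.length ≤ 3 ∧
      (∀ v ∈ τ₁.support, v ∈ horoDeep P i g dbar) ∧
      -- likewise for `γ₂ = (η₂, α₂, τ₂, β₂)`:
      IsGeodesic (GMGraph (S : Set G) P) (η₂.append (α₂.append (τ₂.append β₂))) ∧
      x₂ ∈ horoSphere P i g dbar ∧
      (∀ v ∈ η₂.support.dropLast, v ∉ horoSphere P i g dbar) ∧
      IsVerticalWalk α₂ ∧ IsVerticalWalk β₂ ∧ α₂.length = β₂.length ∧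
      (∀ v ∈ α₂.support, v ∈ horoDeep P i g dbar) ∧
      (∀ v ∈ β₂.support, v ∈ horoDeep P i g dbar) ∧
      IsHorizontalWalk τ₂ ∧ τ₂.length ≤ 3 ∧
      (∀ v ∈ τ₂.support, v ∈ horoDeep P i g dbar) ∧
      -- furthermore `d(x₁, x₂) ≤ 2δ + 1`:
      (GMGraph (S : Set G) P).dist x₁ x₂ ≤ 2 * δ + 1 :=
  statement_1_general S P hSgen hPgen δ hδ hhyp i g dbar hd t₁ t₂ ht₁ ht₁d ht₂ ht₂d
end

section
/- Suppose G is an infinite finitely generated group with finite generating set S, and let Γ be the Cayley graph of G with respect to S, with basepoint the identity vertex *. Then for any integer r > 0 and any point x ∈ Γ − B_{2r}(*) there is a geodesic ray in Γ starting at x whose image avoids B_r(*). -/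
/-! Core definitions: Cayley graphs, combinatorial horoballs, and the
Groves–Manning space of a relatively hyperbolic pair, as a locally finite graph. -/

open SimpleGraph

/-!
König's lemma, applied to the finite sets of geodesic segments of radius `n` centred at the
identity (these exist because `G` is infinite, balls are finite and `G` acts transitively by
isometries), produces a bi-infinite geodesic line through `1`; translate it so that it passes
through `x`. If both of its halves met `B_r(*)`, at points `c m` and `c (-n)`, then `m, n > r`
since `d(*, x) > 2r`, while `m + n = d(c m, c (-n)) ≤ 2r`.
-/

open SimpleGraph CategoryTheory Opposite Pointwise

namespace SimpleGraph

variable {V W : Type} {Γ : SimpleGraph V} {Δ : SimpleGraph W}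

lemma Hom.edist_map_le (f : Γ →g Δ) (a b : V) : Δ.edist (f a) (f b) ≤ Γ.edist a b := by
  by_cases h : Γ.Reachable a b
  · obtain ⟨p, hp⟩ := h.exists_walk_length_eq_edist
    exact (edist_le (p.map f)).trans (by rw [Walk.length_map, hp])
  · rw [edist_eq_top_of_not_reachable h]
    exact le_top

lemma Iso.dist_map (φ : Γ ≃g Δ) (a b : V) : Δ.dist (φ a) (φ b) = Γ.dist a b :=
  congrArg ENat.toNat <| le_antisymm (Hom.edist_map_le φ.toHom a b) <| by
    simpa using Hom.edist_map_le φ.symm.toHom (φ a) (φ b)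

lemma Walk.dist_getVert_getVert {u w : V} {p : Γ.Walk u w} (hp : p.length = Γ.dist u w)
    {i j : ℕ} (hij : i ≤ j) (hj : j ≤ p.length) :
    Γ.dist (p.getVert i) (p.getVert j) = j - i := by
  have h := length_eq_dist_of_subwalk hp
    (((p.take j).isSubwalk_drop i).trans (p.isSubwalk_take j))
  rw [Walk.drop_length, Walk.take_length, Walk.take_getVert, min_eq_right hij,
    min_eq_left hj] at h
  exact h.symm

def IsGeodesicSegment (Γ : SimpleGraph V) (n : ℕ) (f : ℤ → V) : Prop :=
  ∀ k l : ℤ, k.natAbs ≤ n → l.natAbs ≤ n → Γ.dist (f k) (f l) = (k - l).natAbs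

def IsGeodesicLine (Γ : SimpleGraph V) (f : ℤ → V) : Prop :=
  ∀ k l : ℤ, Γ.dist (f k) (f l) = (k - l).natAbs

def IsGeodesicRay (Γ : SimpleGraph V) (c : ℕ → V) : Prop :=
  ∀ m n : ℕ, Γ.dist (c m) (c n) = Nat.dist m n

lemma Reachable.exists_isGeodesicSegment {u w : V} (h : Γ.Reachable u w) {n : ℕ}
    (hn : 2 * n ≤ Γ.dist u w) : ∃ f : ℤ → V, IsGeodesicSegment Γ n f := by
  obtain ⟨p, hp⟩ := h.exists_walk_length_eq_dist
  refine ⟨fun k => p.getVert (n + k).toNat, fun k l hk hl => ?_⟩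
  rcases le_total (n + k).toNat (n + l).toNat with hkl | hlk
  · rw [p.dist_getVert_getVert hp hkl (by omega)]
    omega
  · rw [dist_comm, p.dist_getVert_getVert hp hlk (by omega)]
    omega

lemma IsGeodesicLine.isGeodesicRay {L : ℤ → V} (hL : IsGeodesicLine Γ L) :
    IsGeodesicRay Γ (fun n : ℕ => L n) := fun m n => by
  rw [hL]
  simp only [Nat.dist]
  omega

lemma IsGeodesicLine.comp_neg {L : ℤ → V} (hL : IsGeodesicLine Γ L) :
    IsGeodesicLine Γ (fun k => L (-k)) := fun k l => by
  rw [hL]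
  omega

section Konig

variable (Γ) (v : V)

/-- Normalized to `v` outside `[-n, n]`, so that there are only finitely many of them. -/
def CentredSegment (n : ℕ) : Type :=
  {f : ℤ → V // f 0 = v ∧ (∀ k : ℤ, n < k.natAbs → f k = v) ∧
    IsGeodesicSegment Γ n f}

variable {Γ v}

def CentredSegment.restrict {m n : ℕ} (h : m ≤ n) (f : CentredSegment Γ v n) :
    CentredSegment Γ v m :=
  ⟨fun k => if k.natAbs ≤ m then f.1 k else v, by simpa using f.2.1,
    fun k hk => if_neg (by omega),
    fun k l hk hl => by
      simp only [if_pos hk, if_pos hl]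
      exact f.2.2.2 k l (hk.trans h) (hl.trans h)⟩

lemma CentredSegment.restrict_apply {m n : ℕ} (h : m ≤ n) (f : CentredSegment Γ v n) {k : ℤ}
    (hk : k.natAbs ≤ m) : (f.restrict h).1 k = f.1 k :=
  if_pos hk

lemma CentredSegment.restrict_eq_self {n : ℕ} (f : CentredSegment Γ v n) :
    f.restrict le_rfl = f := by
  refine Subtype.ext (funext fun k => ?_)
  by_cases hk : k.natAbs ≤ n
  · exact if_pos hk
  · exact (if_neg hk).trans (f.2.2.1 k (by omega)).symm

lemma CentredSegment.restrict_restrict {l m n : ℕ} (hlm : l ≤ m) (hmn : m ≤ n)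
    (f : CentredSegment Γ v n) : (f.restrict hmn).restrict hlm = f.restrict (hlm.trans hmn) := by
  refine Subtype.ext (funext fun k => ?_)
  by_cases hk : k.natAbs ≤ l
  · simp only [restrict, if_pos hk, if_pos (hk.trans hlm)]
  · simp only [restrict, if_neg hk]

lemma CentredSegment.finite (hball : ∀ n : ℕ, {w | Γ.dist v w ≤ n}.Finite) (n : ℕ) :
    Finite (CentredSegment Γ v n) := by
  have := (hball n).to_subtype
  have mem_ball (f : CentredSegment Γ v n) (k : Set.Icc (-(n : ℤ)) n) :
      Γ.dist v (f.1 k) ≤ n := by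
    obtain ⟨k, hk⟩ := k
    rw [Set.mem_Icc] at hk
    change Γ.dist v (f.1 k) ≤ n
    have h := f.2.2.2 0 k (by simp) (by omega)
    rw [f.2.1, zero_sub, Int.natAbs_neg] at h
    omega
  refine Finite.of_injective (β := Set.Icc (-(n : ℤ)) n → {w | Γ.dist v w ≤ n})
    (fun f k => ⟨f.1 k, mem_ball f k⟩) fun f g hfg => Subtype.ext (funext fun k => ?_)
  by_cases hk : k.natAbs ≤ n
  · exact congrArg Subtype.val (congrFun hfg ⟨k, by rw [Set.mem_Icc]; omega⟩)
  · rw [f.2.2.1 k (by omega), g.2.2.1 k (by omega)]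

variable (Γ v) in
def centredSegmentSystem : ℕᵒᵖ ⥤ Type where
  obj n := CentredSegment Γ v n.unop
  map f := TypeCat.ofHom (CentredSegment.restrict (leOfHom f.unop))
  map_id _ := ConcreteCategory.hom_ext _ _ CentredSegment.restrict_eq_self
  map_comp f g := ConcreteCategory.hom_ext _ _
    fun s => (s.restrict_restrict (leOfHom g.unop) (leOfHom f.unop)).symm

theorem exists_isGeodesicLine (hball : ∀ n : ℕ, {w | Γ.dist v w ≤ n}.Finite)
    (hseg : ∀ n : ℕ, ∃ f : ℤ → V, f 0 = v ∧ IsGeodesicSegment Γ n f) :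
    ∃ L : ℤ → V, L 0 = v ∧ IsGeodesicLine Γ L := by
  have (n : ℕᵒᵖ) : Finite ((centredSegmentSystem Γ v).obj n) :=
    CentredSegment.finite hball n.unop
  have (n : ℕᵒᵖ) : Nonempty ((centredSegmentSystem Γ v).obj n) := by
    obtain ⟨f, hf0, hf⟩ := hseg n.unop
    exact ⟨⟨fun k => if k.natAbs ≤ n.unop then f k else v, by simpa using hf0,
      fun k hk => if_neg (by omega),
      fun k l hk hl => by simpa only [if_pos hk, if_pos hl] using hf k l hk hl⟩⟩
  obtain ⟨u, hu⟩ := nonempty_sections_of_finite_inverse_system (centredSegmentSystem Γ v)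
  have compat {m n : ℕ} (h : m ≤ n) {k : ℤ} (hk : k.natAbs ≤ m) :
      (u (op n)).1 k = (u (op m)).1 k := by
    rw [← hu (homOfLE h).op]
    exact (CentredSegment.restrict_apply h _ hk).symm
  refine ⟨fun k => (u (op k.natAbs)).1 k, (u (op 0)).2.1, fun k l => ?_⟩
  have hk := compat (le_max_left k.natAbs l.natAbs) (le_refl k.natAbs)
  have hl := compat (le_max_right k.natAbs l.natAbs) (le_refl l.natAbs)
  beta_reduce
  rw [← hk, ← hl]
  exact (u (op _)).2.2.2 k l (le_max_left _ _) (le_max_right _ _)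

end Konig

lemma Connected.exists_isGeodesicRay_not_dist_le (hconn : Γ.Connected) {L : ℤ → V}
    (hL : IsGeodesicLine Γ L) {o : V} {r : ℕ} (hr : 2 * r < Γ.dist o (L 0)) :
    ∃ c : ℕ → V, c 0 = L 0 ∧ IsGeodesicRay Γ c ∧ ∀ n, ¬ Γ.dist o (c n) ≤ r := by
  have far (k : ℤ) (hk : Γ.dist o (L k) ≤ r) : r < k.natAbs := by
    have := hconn.dist_triangle (u := o) (v := L k) (w := L 0)
    rw [hL] at this
    omega
  by_cases hpos : ∀ n : ℕ, ¬ Γ.dist o (L n) ≤ r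
  · exact ⟨fun n => L n, rfl, hL.isGeodesicRay, hpos⟩
  refine ⟨fun n => L (-n), by simp, hL.comp_neg.isGeodesicRay, fun n hn => ?_⟩
  push Not at hpos
  obtain ⟨m, hm⟩ := hpos
  have hmn := hconn.dist_triangle (u := L m) (v := o) (w := L (-n))
  rw [hL, dist_comm] at hmn
  have hn' : Γ.dist o (L (-n)) ≤ r := hn
  have := far m hm
  have := far (-n) hn'
  omega

end SimpleGraph

namespace GM

variable {G : Type} [Group G] {S : Set G}

def cayleyGraphMulLeft (g : G) : cayleyGraph S ≃g cayleyGraph S where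
  toEquiv := Equiv.mulLeft g
  map_rel_iff' := by
    simp [cayleyGraph, cayleyAdj, mul_assoc]

lemma cayleyGraph_dist_mul_left (g a b : G) :
    (cayleyGraph S).dist (g * a) (g * b) = (cayleyGraph S).dist a b :=
  (cayleyGraphMulLeft g).dist_map a b

lemma cayleyGraph_reachable_mul_left (g : G) {a b : G} (h : (cayleyGraph S).Reachable a b) :
    (cayleyGraph S).Reachable (g * a) (g * b) :=
  (cayleyGraphMulLeft g).reachable_iff.mpr h

lemma cayleyGraph_connected (hS : Subgroup.closure S = ⊤) : (cayleyGraph S).Connected := by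
  have one_reachable (g : G) : (cayleyGraph S).Reachable 1 g := by
    induction (hS ▸ Subgroup.mem_top g : g ∈ Subgroup.closure S) using
      Subgroup.closure_induction with
    | mem s hs =>
      by_cases h1 : s = 1
      · rw [h1]
      · exact Adj.reachable ⟨Ne.symm h1, Or.inl (by simpa using hs)⟩
    | one => rfl
    | mul a b _ _ ha hb => exact ha.trans (by simpa using cayleyGraph_reachable_mul_left a hb)
    | inv a _ ha =>
      have := cayleyGraph_reachable_mul_left a⁻¹ ha
      rw [mul_one, inv_mul_cancel] at this
      exact this.symm
  have : Nonempty G := ⟨1⟩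
  exact ⟨fun a b => (one_reachable a).symm.trans (one_reachable b)⟩

lemma cayleyGraph_inv_mul_mem_pow [DecidableEq G] {S : Finset G} {a b : G}
    (p : (cayleyGraph (S : Set G)).Walk a b) :
    a⁻¹ * b ∈ (insert 1 (S ∪ S⁻¹)) ^ p.length := by
  induction p with
  | nil => simp
  | @cons a c b h p ih =>
    rw [Walk.length_cons, pow_succ', show a⁻¹ * b = (a⁻¹ * c) * (c⁻¹ * b) by group]
    refine Finset.mul_mem_mul ?_ ih
    simp only [Finset.mem_insert, Finset.mem_union, Finset.mem_inv', mul_inv_rev, inv_inv]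
    obtain ⟨-, h | h⟩ := h
    · exact Or.inr (Or.inl h)
    · exact Or.inr (Or.inr h)

lemma cayleyGraph_finite_setOf_dist_le {S : Finset G}
    (hconn : (cayleyGraph (S : Set G)).Connected) (n : ℕ) :
    {g : G | (cayleyGraph (S : Set G)).dist 1 g ≤ n}.Finite := by
  classical
  refine (insert 1 (S ∪ S⁻¹) ^ n).finite_toSet.subset fun g hg => ?_
  obtain ⟨p, hp⟩ := hconn.exists_walk_length_eq_dist 1 g
  have := cayleyGraph_inv_mul_mem_pow p
  rw [inv_one, one_mul, hp] at this
  exact Finset.pow_subset_pow_right (Finset.mem_insert_self _ _) hg this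

lemma cayleyGraph_exists_isGeodesicLine [Infinite G] {S : Finset G}
    (hconn : (cayleyGraph (S : Set G)).Connected) :
    ∃ L : ℤ → G, L 0 = 1 ∧ IsGeodesicLine (cayleyGraph (S : Set G)) L := by
  refine exists_isGeodesicLine (cayleyGraph_finite_setOf_dist_le hconn) fun n => ?_
  obtain ⟨g, hg⟩ := (cayleyGraph_finite_setOf_dist_le hconn (2 * n)).exists_notMem
  obtain ⟨f, hf⟩ := (hconn 1 g).exists_isGeodesicSegment (n := n) (by simp at hg; omega)
  refine ⟨fun k => (f 0)⁻¹ * f k, inv_mul_cancel _, fun k l hk hl => ?_⟩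
  rw [cayleyGraph_dist_mul_left, hf k l hk hl]

end GM

open GM in
theorem statement_5_general {G : Type} [Group G] [Infinite G]
    (S : Finset G) (hSgen : Subgroup.closure (S : Set G) = ⊤)
    (r : ℕ)
    (x : G) (hx : ¬ (cayleyGraph (S : Set G)).dist 1 x ≤ 2 * r) :
    ∃ c : ℕ → G, c 0 = x ∧
      (∀ m n : ℕ, (cayleyGraph (S : Set G)).dist (c m) (c n) = Nat.dist m n) ∧
      (∀ n : ℕ, ¬ (cayleyGraph (S : Set G)).dist 1 (c n) ≤ r) := by
  have hconn := cayleyGraph_connected hSgen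
  obtain ⟨L, hL0, hL⟩ := cayleyGraph_exists_isGeodesicLine (S := S) hconn
  have hxL : IsGeodesicLine (cayleyGraph (S : Set G)) (fun k => x * L k) := fun k l => by
    rw [cayleyGraph_dist_mul_left, hL]
  have hfar : 2 * r < (cayleyGraph (S : Set G)).dist 1 (x * L 0) := by
    rw [hL0, mul_one]
    omega
  obtain ⟨c, hc0, hc⟩ := hconn.exists_isGeodesicRay_not_dist_le hxL hfar
  exact ⟨c, by rw [hc0, hL0, mul_one], hc⟩

open GM in
/-- no linear dead ends.  Suppose `G` is an infinite finitely generated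
group with finite generating set `S`, and let `Γ` be the Cayley graph of `G` with respect
to `S`, with basepoint the identity vertex `*`.  Then for any integer `r > 0` and any
vertex `x ∈ Γ − B_{2r}(*)` there is a geodesic ray in `Γ` starting at `x` whose image
avoids `B_r(*)`. -/
theorem statement_5 {G : Type} [Group G] [Infinite G]
    (S : Finset G) (hSgen : Subgroup.closure (S : Set G) = ⊤)
    (r : ℕ) (hr : 0 < r)
    (x : G) (hx : ¬ (cayleyGraph (S : Set G)).dist 1 x ≤ 2 * r) :
    ∃ c : ℕ → G, c 0 = x ∧
      (∀ m n : ℕ, (cayleyGraph (S : Set G)).dist (c m) (c n) = Nat.dist m n) ∧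
      (∀ n : ℕ, ¬ (cayleyGraph (S : Set G)).dist 1 (c n) ≤ r) :=
  statement_5_general S hSgen r x hx
end
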